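/- arXiv:2102.00494 — 2 statements merged into one kernel-verified Lean document; each statement's English description precedes it below -/
import Mathlib

section
/- Assume additionally that δ ≤ n−2. Then the cardinality of the set tar'' = {δ-monomials m : r ≤ deg m ≤ s−1, m_δ ≤ r−w−1, and m_{δ+1} ≥ w} equals Σ_{d=r}^{s−1} Σ_{e = d−r+w+1}^{d} Σ_{u=0}^{e−w} C(u + n − δ − 2, u), where C denotes the binomial coefficient. -/
open MvPolynomial
open scoped Classical

noncomputable section

/-- Total degree of an exponent vector `m : Fin n →₀ ℕ`. -/
def mdeg {n : ℕ} (m : Fin n →₀ ℕ) : ℕ := ∑ k, m k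

/-- `m` is a δ-monomial: all exponents of variables strictly before `δ` vanish. -/
def IsDeltaMon {n : ℕ} (δ : Fin n) (m : Fin n →₀ ℕ) : Prop := ∀ k < δ, m k = 0

/-- `m` is a (δ+1)-monomial: all exponents of variables up to and including `δ` vanish. -/
def IsSuccDeltaMon {n : ℕ} (δ : Fin n) (m : Fin n →₀ ℕ) : Prop := ∀ k ≤ δ, m k = 0

/-- The order ideal `O(n,r,s,δ,w)`. -/
def OIdeal {n : ℕ} (r s w : ℕ) (δ : Fin n) : Set (Fin n →₀ ℕ) :=
  {m | mdeg m < r ∨ (IsDeltaMon δ m ∧ r ≤ mdeg m ∧ mdeg m ≤ s ∧ m δ + w + 1 ≤ r)}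

/-- The border `∂O`. -/
def Border {n : ℕ} (r s w : ℕ) (δ : Fin n) : Set (Fin n →₀ ℕ) :=
  {m | m ∉ OIdeal r s w δ ∧
    ∃ (α : Fin n) (t : Fin n →₀ ℕ), t ∈ OIdeal r s w δ ∧ m = Finsupp.single α 1 + t}

/-- The set `S_D` of "diagonal" border monomials. -/
def SD {n : ℕ} (r s w : ℕ) (δ : Fin n) : Set (Fin n →₀ ℕ) :=
  {m | m ∈ Border r s w δ ∧ IsDeltaMon δ m ∧ r + 1 ≤ mdeg m ∧ mdeg m ≤ s}

/-- The set `S_L` of "leading" monomials. -/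
def SL {n : ℕ} (r w : ℕ) (δ : Fin n) : Set (Fin n →₀ ℕ) :=
  {m | IsDeltaMon δ m ∧ mdeg m = r ∧ r - w ≤ m δ}

/-- `tar = {m ∈ O : r ≤ deg m ≤ s}`. -/
def Tar {n : ℕ} (r s w : ℕ) (δ : Fin n) : Set (Fin n →₀ ℕ) :=
  {m | m ∈ OIdeal r s w δ ∧ r ≤ mdeg m ∧ mdeg m ≤ s}

/-- `tar' = {m ∈ tar : deg m ≤ s−1}`. -/
def Tar' {n : ℕ} (r s w : ℕ) (δ : Fin n) : Set (Fin n →₀ ℕ) :=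
  {m | m ∈ Tar r s w δ ∧ mdeg m ≤ s - 1}

/-- `tar'' = {m ∈ tar' : m_{δ+1} ≥ w}` (`δ'` is the index of `x_{δ+1}`). -/
def Tar'' {n : ℕ} (r s w : ℕ) (δ δ' : Fin n) : Set (Fin n →₀ ℕ) :=
  {m | m ∈ Tar' r s w δ ∧ w ≤ m δ'}

/-- `trailmon = {m ∈ O : deg m = s}`. -/
def Trail {n : ℕ} (r s w : ℕ) (δ : Fin n) : Set (Fin n →₀ ℕ) :=
  {m | m ∈ OIdeal r s w δ ∧ mdeg m = s}

/-- `leadmon = {m : deg m = r, m ∉ O}`. -/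
def Lead {n : ℕ} (r s w : ℕ) (δ : Fin n) : Set (Fin n →₀ ℕ) :=
  {m | mdeg m = r ∧ m ∉ OIdeal r s w δ}

/-- `Seg_a`: δ-monomials of degree `r` with `x_δ`-exponent `r − a`. -/
def SegA {n : ℕ} (r a : ℕ) (δ : Fin n) : Set (Fin n →₀ ℕ) :=
  {b | IsDeltaMon δ b ∧ mdeg b = r ∧ b δ = r - a}

/-- The monomial `x_δ^{r−a}·x_{δ+1}^{a}` (`δ'` is the index of `x_{δ+1}`). -/
def bstar {n : ℕ} (r a : ℕ) (δ δ' : Fin n) : Fin n →₀ ℕ :=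
  Finsupp.single δ (r - a) + Finsupp.single δ' a

/-- Truncation: sum of homogeneous components of degree `0` through `s`. -/
def truncLE {n : ℕ} {R : Type*} [CommRing R] (s : ℕ) (P : MvPolynomial (Fin n) R) :
    MvPolynomial (Fin n) R :=
  ∑ m ∈ P.support.filter (fun m => mdeg m ≤ s), monomial m (coeff m P)

/-- `optX R none = 1 = X₀`, `optX R (some a) = X a`. -/
def optX {n : ℕ} (R : Type*) [CommRing R] : Option (Fin n) → MvPolynomial (Fin n) R
  | none => 1
  | some a => X a

/-- `optE none = 0 = e₀`, `optE (some a) = e_a`. -/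
def optE {n : ℕ} : Option (Fin n) → (Fin n →₀ ℕ)
  | none => 0
  | some a => Finsupp.single a 1

/-- The reduction operator determined by a target function `UpsD` on `S_D`. -/
def redFn {n : ℕ} {R : Type*} [CommRing R] (r s w : ℕ) (δ : Fin n)
    (UpsD : (Fin n →₀ ℕ) → MvPolynomial (Fin n) R) (P : MvPolynomial (Fin n) R) :
    MvPolynomial (Fin n) R :=
  (∑ m ∈ P.support.filter (fun m => m ∈ Tar r s w δ), monomial m (coeff m P)) -
  ∑ m ∈ P.support.filter (fun m => m ∈ SD r s w δ), coeff m P • UpsD m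

/-- The polynomial ring over `K` in the distinguished indeterminates `C_{(t,b)}`
and the modification indeterminates `θ_m`. -/
abbrev BigA (K : Type*) [Field K] {n : ℕ} (r s w : ℕ) (δ δ' : Fin n) : Type _ :=
  MvPolynomial ((↥(Trail r s w δ) × ↥(Lead r s w δ)) ⊕ ↥(Tar'' r s w δ δ')) K

/-- The generic linear combination `N_b = Σ_t C_{(t,b)}·X^t` for `b ∈ leadmon`, `0` otherwise. -/
def NB (K : Type*) [Field K] {n : ℕ} (r s w : ℕ) (δ δ' : Fin n) (b : Fin n →₀ ℕ) :
    MvPolynomial (Fin n) (BigA K r s w δ δ') :=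
  if hb : b ∈ Lead r s w δ then
    ∑ᶠ t : ↥(Trail r s w δ),
      monomial (t : Fin n →₀ ℕ)
        (MvPolynomial.X (Sum.inl (t, ⟨b, hb⟩)) : BigA K r s w δ δ')
  else 0

/-! Write a δ-monomial as `x_δ^a x_{δ+1}^b t` with `t` a monomial in the `n − δ − 1`
variables `x_{δ+2}, …, x_n`, and sort the monomials of `tar''` by `d = deg m`, `e = d − a`
and `u = deg t`. The constraints become `d − r + w + 1 ≤ e ≤ d` and `u ≤ e − w`, and the
fibre over `(d, e, u)` is in bijection with the monomials of degree `u` in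
`x_{δ+2}, …, x_n`, of which there are `C(u + n − δ − 2, u)` by stars and bars. -/

open Finset

theorem Finsupp.degree_eq_degree_erase_add {ι : Type*} (a : ι) (f : ι →₀ ℕ) :
    f.degree = (f.erase a).degree + f a := by
  conv_lhs => rw [← f.erase_add_single a]
  rw [map_add, Finsupp.degree_single]

namespace Finset

variable {ι : Type*} [DecidableEq ι]

theorem mem_finsuppAntidiag_iff_degree {s : Finset ι} {d : ℕ} {f : ι →₀ ℕ} :
    f ∈ s.finsuppAntidiag d ↔ f.degree = d ∧ f.support ⊆ s :=
  mem_finsuppAntidiag'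

theorem card_filter_finsuppAntidiag_insert {a : ι} {s : Finset ι} (ha : a ∉ s) (d : ℕ)
    (p : ℕ → Prop) [DecidablePred p] (q : (ι →₀ ℕ) → Prop) [DecidablePred q] :
    #{f ∈ (insert a s).finsuppAntidiag d | p (f a) ∧ q (f.erase a)} =
      ∑ e ∈ range (d + 1) with p (d - e), #{g ∈ s.finsuppAntidiag e | q g} := by
  rw [card_eq_sum_card_fiberwise (f := fun f => d - f a) (t := range (d + 1))
    (fun f _ => by simp only [coe_range, Set.mem_Iio]; omega), sum_filter]
  refine sum_congr rfl fun e he => ?_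
  have he : e ≤ d := Nat.lt_succ_iff.mp (mem_range.mp he)
  split_ifs with hp
  · refine card_nbij' (fun f => f.erase a) (fun g => g + Finsupp.single a (d - e)) ?_ ?_ ?_ ?_
    · intro f hf
      simp only [mem_coe, mem_filter, mem_finsuppAntidiag_iff_degree] at hf ⊢
      obtain ⟨⟨⟨hfd, hfs⟩, -, hq⟩, hfe⟩ := hf
      refine ⟨⟨by have := f.degree_eq_degree_erase_add a; omega, ?_⟩, hq⟩
      rw [Finsupp.support_erase]
      exact fun x hx =>
        (mem_insert.mp (hfs (mem_of_mem_erase hx))).resolve_left (ne_of_mem_erase hx)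
    · intro g hg
      simp only [mem_coe, mem_filter, mem_finsuppAntidiag_iff_degree] at hg ⊢
      obtain ⟨⟨hgd, hgs⟩, hq⟩ := hg
      have hga : g a = 0 := Finsupp.notMem_support_iff.mp fun h => ha (hgs h)
      have herase : (g + Finsupp.single a (d - e)).erase a = g := by
        rw [Finsupp.erase_add, Finsupp.erase_single, add_zero,
          Finsupp.erase_of_notMem_support fun h => ha (hgs h)]
      have happ : (g + Finsupp.single a (d - e)) a = d - e := by simp [hga]
      refine ⟨⟨⟨?_, ?_⟩, by rwa [happ], by rwa [herase]⟩, by simp only [happ]; omega⟩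
      · rw [map_add, Finsupp.degree_single]; omega
      · refine Finsupp.support_add.trans (union_subset (hgs.trans (subset_insert a s)) ?_)
        exact Finsupp.support_single_subset.trans (singleton_subset_iff.mpr (mem_insert_self a s))
    · intro f hf
      simp only [mem_coe, mem_filter, mem_finsuppAntidiag_iff_degree] at hf
      obtain ⟨⟨⟨hfd, -⟩, -⟩, hfe⟩ := hf
      have : f a = d - e := by have := f.degree_eq_degree_erase_add a; omega
      simp only [← this, Finsupp.erase_add_single]
    · intro g hg
      simp only [mem_coe, mem_filter, mem_finsuppAntidiag_iff_degree] at hg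
      dsimp only
      rw [Finsupp.erase_add, Finsupp.erase_single, add_zero,
        Finsupp.erase_of_notMem_support fun h => ha (hg.1.2 h)]
  · refine card_eq_zero.mpr (filter_eq_empty_iff.mpr fun f hf hfe => ?_)
    simp only [mem_filter, mem_finsuppAntidiag_iff_degree] at hf
    obtain ⟨⟨hfd, -⟩, hpf, -⟩ := hf
    have : f a = d - e := by have := f.degree_eq_degree_erase_add a; omega
    exact hp (this ▸ hpf)

theorem card_filter_le_apply_finsuppAntidiag_Ici [LinearOrder ι] [LocallyFiniteOrderTop ι]
    (a : ι) {w e : ℕ} (hwe : w ≤ e) :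
    #{g ∈ (Ici a).finsuppAntidiag e | w ≤ g a} =
      ∑ u ∈ Icc 0 (e - w), #((Ioi a).finsuppAntidiag u) := by
  have hsplit : {g ∈ (Ici a).finsuppAntidiag e | w ≤ g a} =
      {g ∈ (insert a (Ioi a)).finsuppAntidiag e | w ≤ g a ∧ True} := by
    simp only [Ioi_insert, and_true]
  have hrange : {u ∈ range (e + 1) | w ≤ e - u} = Icc 0 (e - w) := by
    ext u
    simp only [mem_filter, mem_range, mem_Icc]
    omega
  rw [hsplit, card_filter_finsuppAntidiag_insert notMem_Ioi_self e (fun x => w ≤ x)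
    (fun _ => True), hrange]
  simp only [filter_true]

end Finset

theorem Fin.Ici_eq_insert_Ici_add_one {n : ℕ} (δ : Fin n) (hδ : (δ : ℕ) + 1 < n) :
    Ici δ = insert δ (Ici ⟨(δ : ℕ) + 1, hδ⟩) := by
  rw [← Ioi_insert]
  congr 1
  ext k
  simp only [mem_Ioi, mem_Ici, Fin.lt_def, Fin.le_def]
  omega

section DeltaMonomials

variable {n : ℕ}

theorem mdeg_eq_degree (m : Fin n →₀ ℕ) : mdeg m = m.degree :=
  (Finsupp.degree_eq_sum m).symm

theorem isDeltaMon_iff_support_subset {δ : Fin n} {m : Fin n →₀ ℕ} :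
    IsDeltaMon δ m ↔ m.support ⊆ Ici δ := by
  simp only [IsDeltaMon, subset_iff, Finsupp.mem_support_iff, mem_Ici]
  exact forall_congr' fun k => by rw [← not_lt, Ne, not_imp_not]

theorem ncard_isDeltaMon_mdeg_mem_Icc (δ : Fin n) (r k : ℕ) (P : (Fin n →₀ ℕ) → Prop)
    [DecidablePred P] :
    {m | IsDeltaMon δ m ∧ r ≤ mdeg m ∧ mdeg m ≤ k ∧ P m}.ncard =
      ∑ d ∈ Icc r k, #{f ∈ (Ici δ).finsuppAntidiag d | P f} := by
  have hS : {m | IsDeltaMon δ m ∧ r ≤ mdeg m ∧ mdeg m ≤ k ∧ P m} =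
      ↑((Icc r k).biUnion fun d => {f ∈ (Ici δ).finsuppAntidiag d | P f}) := by
    ext m
    simp only [Set.mem_ofPred_eq, coe_biUnion, coe_filter, mem_coe, mem_Icc, Set.mem_iUnion,
      mem_finsuppAntidiag_iff_degree, ← mdeg_eq_degree, isDeltaMon_iff_support_subset]
    grind
  rw [hS, Set.ncard_coe_finset, card_biUnion]
  intro d _ d' _ hne
  refine disjoint_left.mpr fun f hf hf' => hne ?_
  simp only [mem_filter, mem_finsuppAntidiag_iff_degree] at hf hf'
  exact hf.1.1.symm.trans hf'.1.1

theorem card_filter_finsuppAntidiag_Ici_apply_apply_succ (δ : Fin n)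
    (hδ : (δ : ℕ) + 1 < n) {r w d : ℕ} (hrd : r ≤ d) :
    #{f ∈ (Ici δ).finsuppAntidiag d | f δ + w + 1 ≤ r ∧ w ≤ f ⟨(δ : ℕ) + 1, hδ⟩} =
      ∑ e ∈ Icc (d - r + w + 1) d,
        #{g ∈ (Ici (⟨(δ : ℕ) + 1, hδ⟩ : Fin n)).finsuppAntidiag e |
          w ≤ g ⟨(δ : ℕ) + 1, hδ⟩} := by
  set δ' : Fin n := ⟨(δ : ℕ) + 1, hδ⟩
  have hsplit : {f ∈ (Ici δ).finsuppAntidiag d | f δ + w + 1 ≤ r ∧ w ≤ f δ'} =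
      {f ∈ (insert δ (Ici δ')).finsuppAntidiag d |
        f δ + w + 1 ≤ r ∧ w ≤ (f.erase δ) δ'} := by
    have hδ'δ : δ' ≠ δ := by simp [δ', Fin.ext_iff]
    simp only [Finsupp.erase_ne hδ'δ]
    rw [Fin.Ici_eq_insert_Ici_add_one δ hδ]
  have hrange : {e ∈ range (d + 1) | d - e + w + 1 ≤ r} = Icc (d - r + w + 1) d := by
    ext e
    simp only [mem_filter, mem_range, mem_Icc]
    omega
  rw [hsplit, card_filter_finsuppAntidiag_insert (by simp [δ', Fin.le_def]) d
    (fun x => x + w + 1 ≤ r) (fun g => w ≤ g δ'), hrange]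

end DeltaMonomials

theorem statement5_general (n r s w : ℕ) (δ : Fin n)
    (hδ : (δ : ℕ) + 1 < n) (hδn : (δ : ℕ) + 3 ≤ n) :
    Set.ncard {m : Fin n →₀ ℕ | IsDeltaMon δ m ∧ r ≤ mdeg m ∧ mdeg m ≤ s - 1 ∧
        m δ + w + 1 ≤ r ∧ w ≤ m ⟨(δ : ℕ) + 1, hδ⟩} =
      ∑ d ∈ Finset.Icc r (s - 1), ∑ e ∈ Finset.Icc (d - r + w + 1) d,
        ∑ u ∈ Finset.Icc 0 (e - w), (u + (n - ((δ : ℕ) + 3))).choose u := by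
  rw [ncard_isDeltaMon_mdeg_mem_Icc]
  refine sum_congr rfl fun d hd => ?_
  rw [card_filter_finsuppAntidiag_Ici_apply_apply_succ δ hδ (mem_Icc.mp hd).1]
  refine sum_congr rfl fun e he => ?_
  rw [card_filter_le_apply_finsuppAntidiag_Ici _ (by have := (mem_Icc.mp he).1; omega)]
  refine sum_congr rfl fun u _ => ?_
  rw [card_finsuppAntidiag_nat_eq_choose, Fin.card_Ioi]
  congr 1
  dsimp only
  omega

/-- the cardinality of `tar''` (assuming additionally `δ ≤ n−2`,
i.e. `(δ:ℕ) + 3 ≤ n` in our 0-based indexing). -/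
theorem statement5 (n r s w : ℕ) (δ : Fin n) (hn : 2 ≤ n) (hr : 2 ≤ r) (hrs : r < s)
    (hδ : (δ : ℕ) + 1 < n) (hw : w + 1 ≤ r) (hδn : (δ : ℕ) + 3 ≤ n) :
    Set.ncard {m : Fin n →₀ ℕ | IsDeltaMon δ m ∧ r ≤ mdeg m ∧ mdeg m ≤ s - 1 ∧
        m δ + w + 1 ≤ r ∧ w ≤ m ⟨(δ : ℕ) + 1, hδ⟩} =
      ∑ d ∈ Finset.Icc r (s - 1), ∑ e ∈ Finset.Icc (d - r + w + 1) d,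
        ∑ u ∈ Finset.Icc 0 (e - w), (u + (n - ((δ : ℕ) + 3))).choose u :=
  statement5_general n r s w δ hδ hδn
end
end

section
/- Let R be a commutative ring and let P ∈ R[x_1,…,x_n] be supported in tar''. Then there exists a function Υ : Seg_w → R[x_1,…,x_n] such that: (i) Υ(b*) = P; (ii) Υ(b) is supported in tar' for every b ∈ Seg_w; (iii) whenever b, b′ ∈ Seg_w and δ ≤ α, β ≤ n satisfy e_α + b = e_β + b′, one has X_α·Υ(b) = X_β·Υ(b′); and (iv) X^{b*}·Υ(b) = X^{b}·P for every b ∈ Seg_w. -/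
open MvPolynomial
open scoped Classical

noncomputable section

lemma mdeg_add {n : ℕ} (a b : Fin n →₀ ℕ) : mdeg (a + b) = mdeg a + mdeg b := by
  simp [mdeg, Finsupp.add_apply, Finset.sum_add_distrib]

lemma mdeg_single {n : ℕ} (a : Fin n) (c : ℕ) : mdeg (Finsupp.single a c) = c := by
  simp [mdeg, Finsupp.single_apply]

lemma X_mul_monomial' {n : ℕ} {R : Type*} [CommRing R] (α : Fin n) (u : Fin n →₀ ℕ) (c : R) :
    X α * monomial u c = monomial (Finsupp.single α 1 + u) c := by
  rw [X, monomial_mul, one_mul]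

/-- existence of the Step-1 target assignment on `Seg_w`. -/
theorem statement6 (R : Type*) [CommRing R] (n r s w : ℕ) (δ : Fin n)
    (hn : 2 ≤ n) (hr : 2 ≤ r) (hrs : r < s) (hδ : (δ : ℕ) + 1 < n) (hw : w + 1 ≤ r)
    (P : MvPolynomial (Fin n) R)
    (hP : (P.support : Set (Fin n →₀ ℕ)) ⊆ Tar'' r s w δ ⟨(δ : ℕ) + 1, hδ⟩) :
    ∃ Ups : (Fin n →₀ ℕ) → MvPolynomial (Fin n) R,
      Ups (bstar r w δ ⟨(δ : ℕ) + 1, hδ⟩) = P ∧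
      (∀ b ∈ SegA r w δ, ((Ups b).support : Set (Fin n →₀ ℕ)) ⊆ Tar' r s w δ) ∧
      (∀ b ∈ SegA r w δ, ∀ b' ∈ SegA r w δ, ∀ α β : Fin n, δ ≤ α → δ ≤ β →
        Finsupp.single α 1 + b = Finsupp.single β 1 + b' →
        X α * Ups b = X β * Ups b') ∧
      (∀ b ∈ SegA r w δ,
        monomial (bstar r w δ ⟨(δ : ℕ) + 1, hδ⟩) (1 : R) * Ups b =
          monomial b (1 : R) * P) := by
  set δ' : Fin n := ⟨(δ : ℕ) + 1, hδ⟩ with hδ'def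
  set bst : Fin n →₀ ℕ := bstar r w δ δ' with hbstdef
  have hδδ' : δ ≠ δ' := by
    intro h
    have : (δ : ℕ) = (δ' : ℕ) := congrArg Fin.val h
    simp [hδ'def] at this
  have hbstδ : bst δ = r - w := by
    simp [hbstdef, bstar, Finsupp.single_apply, hδδ'.symm]
  have hbstδ' : bst δ' = w := by
    simp [hbstdef, bstar, Finsupp.single_apply, hδδ']
  have hbstk : ∀ k : Fin n, k ≠ δ → k ≠ δ' → bst k = 0 := by
    intro k h1 h2
    simp [hbstdef, bstar, Finsupp.single_apply, Ne.symm h1, Ne.symm h2]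
  have hmdegbst : mdeg bst = r := by
    rw [hbstdef, bstar, mdeg_add, mdeg_single, mdeg_single]
    omega
  -- facts about monomials in the support of P
  have hfacts : ∀ m ∈ P.support, IsDeltaMon δ m ∧ r ≤ mdeg m ∧ mdeg m ≤ s - 1 ∧
      m δ + w + 1 ≤ r ∧ w ≤ m δ' := by
    intro m hm
    have h := hP hm
    simp only [Tar'', Tar', Tar, OIdeal, Set.mem_setOf_eq] at h
    obtain ⟨⟨⟨hO, hr1, hs1⟩, hs2⟩, hw2⟩ := h
    rcases hO with h | ⟨hmon, _, _, hδbd⟩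
    · omega
    · exact ⟨hmon, hr1, hs2, hδbd, hw2⟩
  -- key inequality
  have hle : ∀ m ∈ P.support, ∀ b ∈ SegA r w δ, bst ≤ m + b := by
    intro m hm b hb
    obtain ⟨hmon, hrm, hsm, hδm, hwm⟩ := hfacts m hm
    obtain ⟨hbmon, hbdeg, hbδ⟩ := hb
    intro k
    rcases eq_or_ne k δ with rfl | h1
    · rw [hbstδ, Finsupp.add_apply, hbδ]; omega
    rcases eq_or_ne k δ' with rfl | h2
    · rw [hbstδ', Finsupp.add_apply]; omega
    · rw [hbstk k h1 h2]; omega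
  refine ⟨fun b => ∑ m ∈ P.support, monomial (m + b - bst) (coeff m P), ?_, ?_, ?_, ?_⟩
  · -- Ups b* = P
    simp only
    conv_rhs => rw [P.as_sum]
    refine Finset.sum_congr rfl fun m _ => ?_
    rw [add_tsub_cancel_right]
  · -- supports
    intro b hb u hu
    simp only [Finset.coe_subset, Finset.mem_coe] at hu
    have hc : coeff u (∑ m ∈ P.support, monomial (m + b - bst) (coeff m P)) ≠ 0 :=
      MvPolynomial.mem_support_iff.mp hu
    rw [MvPolynomial.coeff_sum] at hc
    obtain ⟨m, hm, hne⟩ := Finset.exists_ne_zero_of_sum_ne_zero hc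
    rw [MvPolynomial.coeff_monomial] at hne
    have heq : m + b - bst = u := by
      by_contra h; simp [h] at hne
    obtain ⟨hmon, hrm, hsm, hδm, hwm⟩ := hfacts m hm
    obtain ⟨hbmon, hbdeg, hbδ⟩ := hb
    have hle' := hle m hm b ⟨hbmon, hbdeg, hbδ⟩
    have hcancel : u + bst = m + b := by
      rw [← heq, tsub_add_cancel_of_le hle']
    have hdeg : mdeg u = mdeg m := by
      have := congrArg mdeg hcancel
      rw [mdeg_add, mdeg_add, hmdegbst, hbdeg] at this
      omega
    have huδ : u δ = m δ := by
      have := congrArg (fun v => v δ) hcancel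
      simp only [Finsupp.add_apply] at this
      rw [hbstδ, hbδ] at this
      omega
    have humon : IsDeltaMon δ u := by
      intro k hk
      have := congrArg (fun v => v k) hcancel
      simp only [Finsupp.add_apply] at this
      rw [hmon k hk, hbmon k hk] at this
      omega
    refine ⟨⟨Or.inr ⟨humon, ?_, ?_, ?_⟩, ?_, ?_⟩, ?_⟩ <;> omega
  · -- compatibility
    intro b hb b' hb' α β hα hβ heq
    simp only [Finset.mul_sum]
    refine Finset.sum_congr rfl fun m hm => ?_
    rw [X_mul_monomial', X_mul_monomial',
      ← add_tsub_assoc_of_le (hle m hm b hb),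
      ← add_tsub_assoc_of_le (hle m hm b' hb')]
    congr 1
    rw [add_left_comm, heq, add_left_comm]
  · -- X^{b*} · Ups b = X^b · P
    intro b hb
    conv_rhs => rw [P.as_sum]
    simp only [Finset.mul_sum]
    refine Finset.sum_congr rfl fun m hm => ?_
    rw [monomial_mul, monomial_mul, add_tsub_cancel_of_le (hle m hm b hb), add_comm b m]
end
end
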